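/- Every ξ = (ξ₁,ξ₂) ∈ Θ² satisfies min{ω(ξ₁), ω(ξ₂)} ≥ 4, where ω(ξᵢ) denotes the ordinary exponent of the single real number ξᵢ (its irrationality exponent measured by ω(ξᵢ) = sup{t > 0 : liminf_{q→∞} min_{0<|a|≤q, b∈ℤ} q^t|aξᵢ + b| < ∞}). -/

import Mathlib

open Filter Set Topology
open scoped ENNReal

noncomputable section

namespace BestApprox

/-- For `ξ ∈ ℝ^m`, the vector `ξ* = (ξ, 1) ∈ ℝ^{m+1}`. -/
def star {m : ℕ} (ξ : Fin m → ℝ) : Fin (m + 1) → ℝ := Fin.snoc ξ 1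

/-- For `q ∈ ℤ^{m+1}`, the vector `q̂ ∈ ℤ^m` of its first `m` coordinates. -/
def hat {m : ℕ} (q : Fin (m + 1) → ℤ) : Fin m → ℤ := fun i => q i.castSucc

/-- View an integer vector as a real vector. -/
def realVec {k : ℕ} (q : Fin k → ℤ) : Fin k → ℝ := fun i => (q i : ℝ)

/-- `|q ⬝ ξ*|`, the absolute value of the linear form. -/
def linForm {m : ℕ} (ξ : Fin m → ℝ) (q : Fin (m + 1) → ℤ) : ℝ :=
  |∑ i, (q i : ℝ) * star ξ i|

/-- `ξ` is totally irrational: `q ⬝ ξ* ≠ 0` for every nonzero integer vector `q`. -/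
def TotallyIrrational {m : ℕ} (ξ : Fin m → ℝ) : Prop :=
  ∀ q : Fin (m + 1) → ℤ, q ≠ 0 → (∑ i, (q i : ℝ) * star ξ i) ≠ 0

/-- `q` is a best approximation for `ξ` (max norm on the first `m` coordinates). -/
def IsBestApprox {m : ℕ} (ξ : Fin m → ℝ) (q : Fin (m + 1) → ℤ) : Prop :=
  hat q ≠ 0 ∧
    ∀ b : Fin (m + 1) → ℤ, hat b ≠ 0 → ‖hat b‖ ≤ ‖hat q‖ → linForm ξ q ≤ linForm ξ b

/-- `Q` is the sequence of best approximations of `ξ`, ordered by increasing norm,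
each best approximation occurring (up to sign) exactly once. -/
def IsBestApproxSeq {m : ℕ} (ξ : Fin m → ℝ) (Q : ℕ → Fin (m + 1) → ℤ) : Prop :=
  (∀ j, IsBestApprox ξ (Q j)) ∧
    (∀ j, ‖hat (Q j)‖ < ‖hat (Q (j + 1))‖) ∧
    (∀ j, linForm ξ (Q (j + 1)) < linForm ξ (Q j)) ∧
    (∀ b, IsBestApprox ξ b → ∃ j, b = Q j ∨ b = -Q j)

/-- Some tail of the best approximation sequence of `ξ` lies in `S`. -/
def HasTailIn {m : ℕ} (ξ : Fin m → ℝ) (S : Set (Fin (m + 1) → ℤ)) : Prop :=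
  ∃ Q : ℕ → Fin (m + 1) → ℤ, IsBestApproxSeq ξ Q ∧ ∃ j₀ : ℕ, ∀ j ≥ j₀, Q j ∈ S

/-- `R(ξ)`: the minimal `R` such that some tail of the best approximation sequence
lies in an `R`-dimensional sublattice of `ℤ^{m+1}`. -/
def Rexp {m : ℕ} (ξ : Fin m → ℝ) : ℕ :=
  sInf {R : ℕ | ∃ L : Submodule ℤ (Fin (m + 1) → ℤ),
    Module.finrank ℤ L = R ∧ HasTailIn ξ (L : Set (Fin (m + 1) → ℤ))}

/-- `Γₙ`: totally irrational `ξ ∈ ℝⁿ` with `R(ξ) = 3`. -/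
def Gamma (n : ℕ) : Set (Fin n → ℝ) := {ξ | TotallyIrrational ξ ∧ Rexp ξ = 3}

/-- `Γ_{n,k}`: totally irrational `ξ ∈ ℝⁿ` with `R(ξ) ≤ k`. -/
def GammaNK (n k : ℕ) : Set (Fin n → ℝ) := {ξ | TotallyIrrational ξ ∧ Rexp ξ ≤ k}

/-- `min{|b ⬝ ξ*| : 0 < ‖b̂‖ ≤ Q}`. -/
def minForm {m : ℕ} (ξ : Fin m → ℝ) (Q : ℝ) : ℝ :=
  sInf {r : ℝ | ∃ b : Fin (m + 1) → ℤ, hat b ≠ 0 ∧ ‖hat b‖ ≤ Q ∧ r = linForm ξ b}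

/-- The uniform exponent `ŵ(ξ)` (as an extended real number). -/
def uexp {m : ℕ} (ξ : Fin m → ℝ) : EReal :=
  sSup {t : EReal | ∃ t' : ℝ, t = (t' : EReal) ∧ 0 < t' ∧
    ∃ C : ℝ, ∀ᶠ Q : ℝ in atTop, Q ^ t' * minForm ξ Q ≤ C}

/-- The ordinary exponent `ω(ξ)` (as an extended real number). -/
def oexp {m : ℕ} (ξ : Fin m → ℝ) : EReal :=
  sSup {t : EReal | ∃ t' : ℝ, t = (t' : EReal) ∧ 0 < t' ∧
    ∃ C : ℝ, ∃ᶠ Q : ℝ in atTop, Q ^ t' * minForm ξ Q ≤ C}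

/-- `H_i ⊆ ℤ^{n+1}`: the two-dimensional sublattice spanned by `e_i` and `e_{n+1}`,
i.e. integer vectors all of whose coordinates vanish except possibly the `i`-th
and the last one. -/
def Hlat (n : ℕ) (i : Fin (n + 1)) : Set (Fin (n + 1) → ℤ) :=
  {q | ∀ j : Fin (n + 1), j ≠ i → j ≠ Fin.last n → q j = 0}

/-- `Θⁿ`: totally irrational `ξ ∈ ℝⁿ` whose tail of best approximations lies in
`H₁ ∪ H₂`, alternately, with any three consecutive ones linearly independent. -/
def Theta (n : ℕ) : Set (Fin n → ℝ) :=
  {ξ | TotallyIrrational ξ ∧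
    ∃ Q : ℕ → Fin (n + 1) → ℤ, IsBestApproxSeq ξ Q ∧
      ∃ j₀ : ℕ,
        (∀ j ≥ j₀, Q j ∈ Hlat n 0 ∪ Hlat n 1) ∧
        (∀ j ≥ j₀, ¬(Q j ∈ Hlat n 0 ∧ Q (j + 1) ∈ Hlat n 0) ∧
          ¬(Q j ∈ Hlat n 1 ∧ Q (j + 1) ∈ Hlat n 1)) ∧
        (∀ j ≥ j₀, LinearIndependent ℝ
          ![realVec (Q j), realVec (Q (j + 1)), realVec (Q (j + 2))])}

/-- `Θₙ(w)` for real `w`: elements of `Θⁿ` with `ŵ(ξ) = w` and `ω(ξ) = w²`. -/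
def ThetaW (n : ℕ) (w : ℝ) : Set (Fin n → ℝ) :=
  {ξ | ξ ∈ Theta n ∧ uexp ξ = (w : EReal) ∧ oexp ξ = ((w ^ 2 : ℝ) : EReal)}

/-- Covering number: minimal number of `ε`-balls needed to cover `S`. -/
def coverNum {X : Type*} [PseudoEMetricSpace X] (S : Set X) (ε : ℝ≥0∞) : ℝ≥0∞ :=
  sInf {N : ℝ≥0∞ | ∃ F : Finset X, (S ⊆ ⋃ x ∈ F, EMetric.ball x ε) ∧ N = F.card}

/-- Upper box (Minkowski) dimension: the infimum of exponents `r ≥ 0` such that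
the covering number is `O(ε^{-r})` as `ε → 0⁺`. -/
def upperBoxDim {X : Type*} [PseudoEMetricSpace X] (S : Set X) : ℝ≥0∞ :=
  sInf {s : ℝ≥0∞ | ∃ r : ℝ, 0 ≤ r ∧ s = ENNReal.ofReal r ∧
    ∃ C : ℝ≥0∞, C ≠ ⊤ ∧ ∀ᶠ ε in 𝓝[>] (0 : ℝ≥0∞), coverNum S ε ≤ C * ε⁻¹ ^ r}

/-- Packing dimension, via the modified upper box dimension. -/
def packingDim {X : Type*} [PseudoEMetricSpace X] (S : Set X) : ℝ≥0∞ :=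
  ⨅ (U : ℕ → Set X) (_ : S ⊆ ⋃ i, U i), ⨆ i, upperBoxDim (U i)

/-! Write `X_j = ‖q̂_j‖` and `L_j = |q_j · ξ*|`. Dirichlet's theorem together with the minimality
of best approximations gives `L_j ≤ (X_{j+1} - 1)⁻²`. Along the tail, `q_j` and `q_{j+2}` lie in
the same plane `H_i` and are independent, so the `2 × 2` integer determinant of their nonzero
coordinates is at least `1` in absolute value; expanding it through the linear forms gives
`1 ≤ 2 X_{j+2} L_j`. Hence `X_{j+2} ≳ X_{j+1}² / 2` and `L_{j+1} ≤ 16 X_{j+1}⁻⁴`. As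
`q_{j+1} ∈ H_i` is an approximation of the single number `ξ_i` of the same quality, and each
plane is visited infinitely often, `ω(ξ_i) ≥ 4`. -/

section LinearForm

variable {m : ℕ} (ξ : Fin m → ℝ)

lemma linForm_eq (q : Fin (m + 1) → ℤ) :
    linForm ξ q = |∑ i, (hat q i : ℝ) * ξ i + q (Fin.last m)| := by
  simp [linForm, Fin.sum_univ_castSucc, star, hat]

@[simp]
lemma hat_neg (q : Fin (m + 1) → ℤ) : hat (-q) = -hat q := rfl

@[simp]
lemma linForm_neg (q : Fin (m + 1) → ℤ) : linForm ξ (-q) = linForm ξ q := by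
  simp [linForm, Finset.sum_neg_distrib, abs_neg]

lemma linForm_nonneg (q : Fin (m + 1) → ℤ) : 0 ≤ linForm ξ q := abs_nonneg _

lemma abs_last_le_linForm_add (q : Fin (m + 1) → ℤ) :
    |(q (Fin.last m) : ℝ)| ≤ linForm ξ q + ‖hat q‖ * ∑ i, |ξ i| := by
  set s := ∑ i, (hat q i : ℝ) * ξ i
  have hs : |s| ≤ ‖hat q‖ * ∑ i, |ξ i| := by
    rw [Finset.mul_sum]
    refine (Finset.abs_sum_le_sum_abs _ _).trans (Finset.sum_le_sum fun i _ => ?_)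
    rw [abs_mul, ← Int.norm_eq_abs]
    exact mul_le_mul_of_nonneg_right (norm_le_pi_norm (hat q) i) (abs_nonneg _)
  calc |(q (Fin.last m) : ℝ)| = |(s + q (Fin.last m)) - s| := by ring_nf
    _ ≤ |s + q (Fin.last m)| + |s| := abs_sub _ _
    _ ≤ linForm ξ q + ‖hat q‖ * ∑ i, |ξ i| := by rw [linForm_eq]; gcongr

lemma finite_setOf_norm_hat_le_linForm_le (R L : ℝ) :
    {v : Fin (m + 1) → ℤ | ‖hat v‖ ≤ R ∧ linForm ξ v ≤ L}.Finite := by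
  refine (isCompact_closedBall (0 : Fin (m + 1) → ℤ)
    (max R (L + R * ∑ i, |ξ i|))).finite_of_discrete.subset ?_
  rintro v ⟨hR, hL⟩
  have hR0 : 0 ≤ R := (norm_nonneg _).trans hR
  rw [mem_closedBall_zero_iff, pi_norm_le_iff_of_nonneg (le_max_of_le_left hR0)]
  intro k
  induction k using Fin.lastCases with
  | last =>
    rw [Int.norm_eq_abs]
    refine le_max_of_le_right ((abs_last_le_linForm_add ξ v).trans ?_)
    gcongr
  | cast k => exact le_max_of_le_left ((norm_le_pi_norm (hat v) k).trans hR)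

theorem exists_linForm_le_inv_pow (hm : 0 < m) {N : ℕ} (hN : 0 < N) :
    ∃ v : Fin (m + 1) → ℤ, hat v ≠ 0 ∧ ‖hat v‖ ≤ N ∧ linForm ξ v ≤ ((N : ℝ) ^ m)⁻¹ := by
  set K : ℕ := N ^ m
  have hK : (0 : ℝ) < K := by positivity
  let f : (Fin m → Fin (N + 1)) → ℝ := fun p => ∑ i, ((p i : ℕ) : ℝ) * ξ i
  have hKf : ∀ p, 0 ≤ K * Int.fract (f p) := fun p => by positivity
  let box : (Fin m → Fin (N + 1)) → Fin K := fun p =>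
    ⟨⌊K * Int.fract (f p)⌋₊, (Nat.floor_lt (hKf p)).2 <|
      mul_lt_of_lt_one_right hK (Int.fract_lt_one _)⟩
  have hcard : Fintype.card (Fin K) < Fintype.card (Fin m → Fin (N + 1)) := by
    simpa [K] using Nat.pow_lt_pow_left (Nat.lt_succ_self N) hm.ne'
  -- pigeonhole: `(N + 1) ^ m` points `p · ξ mod 1` in `N ^ m` intervals of length `1 / N ^ m`
  obtain ⟨p, p', hne, hbox⟩ := Fintype.exists_ne_map_eq_of_card_lt box hcard
  have hclose : |Int.fract (f p) - Int.fract (f p')| < (K : ℝ)⁻¹ := by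
    have hfloor : ⌊K * Int.fract (f p)⌋ = ⌊K * Int.fract (f p')⌋ := by
      rw [← Int.natCast_floor_eq_floor (hKf p), ← Int.natCast_floor_eq_floor (hKf p')]
      exact congrArg (fun k : Fin K => ((k : ℕ) : ℤ)) hbox
    have := Int.abs_sub_lt_one_of_floor_eq_floor hfloor
    rw [← mul_sub, abs_mul, abs_of_pos hK] at this
    rwa [← mul_one (K : ℝ)⁻¹, lt_inv_mul_iff₀ hK]
  set v : Fin (m + 1) → ℤ := Fin.snoc (fun i => ((p i : ℕ) : ℤ) - p' i) (⌊f p'⌋ - ⌊f p⌋)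
  have hv : hat v = fun i => ((p i : ℕ) : ℤ) - p' i := funext fun i => by simp [v, hat]
  refine ⟨v, fun h0 => hne (funext fun i => Fin.ext ?_), ?_, ?_⟩
  · have := congrFun h0 i
    rw [hv] at this
    simp only [Pi.zero_apply] at this
    omega
  · rw [hv, pi_norm_le_iff_of_nonneg (Nat.cast_nonneg N)]
    intro i
    have hi := (p i).isLt
    have hi' := (p' i).isLt
    rw [Int.norm_eq_abs, ← Int.cast_abs, ← Int.cast_natCast]
    exact_mod_cast abs_le.2 ⟨by omega, by omega⟩
  · rw [linForm_eq, hv]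
    simp only [v, Fin.snoc_last]
    calc _ = |Int.fract (f p) - Int.fract (f p')| := by
          push_cast
          simp only [Int.fract, f, sub_mul, Finset.sum_sub_distrib]
          ring_nf
      _ ≤ ((N : ℝ) ^ m)⁻¹ := by exact_mod_cast hclose.le

end LinearForm

lemma minForm_le_linForm {m : ℕ} (ξ : Fin m → ℝ) {b : Fin (m + 1) → ℤ} (hb : hat b ≠ 0)
    {R : ℝ} (hR : ‖hat b‖ ≤ R) : minForm ξ R ≤ linForm ξ b :=
  csInf_le ⟨0, by rintro _ ⟨v, -, -, rfl⟩; exact linForm_nonneg ξ v⟩ ⟨b, hb, hR, rfl⟩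

lemma le_oexp_of_frequently {m : ℕ} {ξ : Fin m → ℝ} {t C : ℝ} (ht : 0 < t)
    (h : ∃ᶠ R in atTop, R ^ t * minForm ξ R ≤ C) : (t : EReal) ≤ oexp ξ :=
  le_sSup ⟨t, rfl, ht, C, h⟩

lemma exists_isBestApprox_le {m : ℕ} (ξ : Fin m → ℝ) {b : Fin (m + 1) → ℤ} (hb : hat b ≠ 0) :
    ∃ q, IsBestApprox ξ q ∧ ‖hat q‖ ≤ ‖hat b‖ ∧ linForm ξ q ≤ linForm ξ b := by
  set S := {v : Fin (m + 1) → ℤ | hat v ≠ 0 ∧ ‖hat v‖ ≤ ‖hat b‖ ∧ linForm ξ v ≤ linForm ξ b}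
  have hS : S.Finite :=
    (finite_setOf_norm_hat_le_linForm_le ξ _ _).subset fun v hv => hv.2
  obtain ⟨q, ⟨hq0, hqn, hql⟩, hmin⟩ :=
    S.exists_min_image (linForm ξ) hS ⟨b, hb, le_rfl, le_rfl⟩
  refine ⟨q, ⟨hq0, fun c hc hcn => ?_⟩, hqn, hql⟩
  by_cases hcl : linForm ξ c ≤ linForm ξ b
  · exact hmin c ⟨hc, hcn.trans hqn, hcl⟩
  · exact hql.trans (not_le.1 hcl).le

namespace IsBestApproxSeq

variable {m : ℕ} {ξ : Fin m → ℝ} {Q : ℕ → Fin (m + 1) → ℤ}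

lemma norm_hat_strictMono (hQ : IsBestApproxSeq ξ Q) : StrictMono fun j => ‖hat (Q j)‖ :=
  strictMono_nat_of_lt_succ hQ.2.1

lemma linForm_strictAnti (hQ : IsBestApproxSeq ξ Q) : StrictAnti fun j => linForm ξ (Q j) :=
  strictAnti_nat_of_succ_lt hQ.2.2.1

lemma tendsto_norm_hat (hQ : IsBestApproxSeq ξ Q) :
    Tendsto (fun j => ‖hat (Q j)‖) atTop atTop := by
  have hinj : Function.Injective fun j => hat (Q j) :=
    fun j k h => hQ.norm_hat_strictMono.injective (congrArg norm h)
  have := tendsto_norm_cocompact_atTop.comp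
    ((cocompact_eq_cofinite (Fin m → ℤ)).symm ▸ hinj.tendsto_cofinite)
  rwa [Nat.cofinite_eq_atTop] at this

lemma linForm_le_of_norm_hat_lt (hQ : IsBestApproxSeq ξ Q) {b : Fin (m + 1) → ℤ}
    (hb : hat b ≠ 0) {j : ℕ} (hlt : ‖hat b‖ < ‖hat (Q (j + 1))‖) : linForm ξ (Q j) ≤ linForm ξ b := by
  obtain ⟨q, hq, hqn, hql⟩ := exists_isBestApprox_le ξ hb
  obtain ⟨k, hk⟩ := hQ.2.2.2 q hq
  have hkq : ‖hat (Q k)‖ = ‖hat q‖ ∧ linForm ξ (Q k) = linForm ξ q := by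
    rcases hk with rfl | rfl <;> simp
  have hkj : k ≤ j :=
    Nat.lt_succ_iff.1 (hQ.norm_hat_strictMono.lt_iff_lt.1 (by linarith [hkq.1]))
  calc linForm ξ (Q j) ≤ linForm ξ (Q k) := hQ.linForm_strictAnti.antitone hkj
    _ = linForm ξ q := hkq.2
    _ ≤ linForm ξ b := hql

lemma linForm_le_inv_pow (hQ : IsBestApproxSeq ξ Q) (hm : 0 < m) (j : ℕ)
    (hX : 1 < ‖hat (Q (j + 1))‖) :
    linForm ξ (Q j) ≤ ((‖hat (Q (j + 1))‖ - 1) ^ m)⁻¹ := by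
  set X := ‖hat (Q (j + 1))‖
  have hceil : 1 < ⌈X⌉₊ := Nat.lt_ceil.2 (by simpa using hX)
  set N := ⌈X⌉₊ - 1
  have hN : (N : ℝ) + 1 = ⌈X⌉₊ := by exact_mod_cast Nat.sub_add_cancel hceil.le
  have hNX : (N : ℝ) < X := by linarith [Nat.ceil_lt_add_one (norm_nonneg (hat (Q (j + 1))))]
  have hXN : X - 1 ≤ N := by linarith [Nat.le_ceil X]
  obtain ⟨v, hv0, hvN, hvL⟩ := exists_linForm_le_inv_pow ξ hm (show 0 < N by omega)
  calc linForm ξ (Q j) ≤ linForm ξ v := hQ.linForm_le_of_norm_hat_lt hv0 (hvN.trans_lt hNX)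
    _ ≤ ((N : ℝ) ^ m)⁻¹ := hvL
    _ ≤ ((X - 1) ^ m)⁻¹ := by gcongr

end IsBestApproxSeq

section Hlat

variable {n : ℕ} {i : Fin n} {q : Fin (n + 1) → ℤ}

lemma hat_eq_single_of_mem_Hlat (hq : q ∈ Hlat n i.castSucc) :
    hat q = Pi.single i (q i.castSucc) := by
  ext k
  by_cases hk : k = i
  · subst hk
    simp [hat]
  · rw [Pi.single_eq_of_ne hk]
    exact hq k.castSucc (Fin.castSucc_injective n |>.ne hk) (Fin.castSucc_ne_last k)

lemma norm_hat_of_mem_Hlat (hq : q ∈ Hlat n i.castSucc) : ‖hat q‖ = |(q i.castSucc : ℝ)| := by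
  rw [hat_eq_single_of_mem_Hlat hq, Pi.norm_single, Int.norm_eq_abs]

lemma linForm_of_mem_Hlat (ξ : Fin n → ℝ) (hq : q ∈ Hlat n i.castSucc) :
    linForm ξ q = |(q i.castSucc : ℝ) * ξ i + q (Fin.last n)| := by
  rw [linForm_eq, hat_eq_single_of_mem_Hlat hq]
  simp [Pi.single_apply]

lemma coord_ne_zero_of_mem_Hlat (hq : q ∈ Hlat n i.castSucc) (h0 : hat q ≠ 0) :
    q i.castSucc ≠ 0 := by
  intro h
  rw [hat_eq_single_of_mem_Hlat hq, h, Pi.single_zero] at h0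
  exact h0 rfl

lemma minForm_coord_le_linForm (ξ : Fin n → ℝ) (hq : q ∈ Hlat n i.castSucc) (h0 : hat q ≠ 0) :
    minForm ![ξ i] ‖hat q‖ ≤ linForm ξ q := by
  set b : Fin 2 → ℤ := ![q i.castSucc, q (Fin.last n)]
  have hb : b ∈ Hlat 1 (0 : Fin 1).castSucc := by
    intro k hk hk'
    fin_cases k <;> simp_all
  have hb0 : hat b ≠ 0 := fun h => coord_ne_zero_of_mem_Hlat hq h0 (congrFun h 0)
  have hbq : ‖hat b‖ = ‖hat q‖ := by
    rw [norm_hat_of_mem_Hlat hb, norm_hat_of_mem_Hlat hq]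
    rfl
  have hlin : linForm ![ξ i] b = linForm ξ q := by
    rw [linForm_of_mem_Hlat _ hb, linForm_of_mem_Hlat ξ hq]
    rfl
  exact hlin ▸ minForm_le_linForm ![ξ i] hb0 hbq.le

lemma minor_ne_zero_of_mem_Hlat {u w : Fin (n + 1) → ℤ} (hu : u ∈ Hlat n i.castSucc)
    (hw : w ∈ Hlat n i.castSucc) (hu0 : hat u ≠ 0)
    (hind : LinearIndependent ℝ ![realVec u, realVec w]) :
    u i.castSucc * w (Fin.last n) - w i.castSucc * u (Fin.last n) ≠ 0 := by
  intro hdet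
  have hrel : (w i.castSucc : ℝ) • realVec u + (-(u i.castSucc : ℝ)) • realVec w = 0 := by
    funext k
    simp only [Pi.add_apply, Pi.smul_apply, realVec, smul_eq_mul, Pi.zero_apply]
    by_cases hki : k = i.castSucc
    · subst hki
      ring
    by_cases hkl : k = Fin.last n
    · subst hkl
      have : ((u i.castSucc * w (Fin.last n) - w i.castSucc * u (Fin.last n) : ℤ) : ℝ) = 0 := by
        exact_mod_cast hdet
      push_cast at this
      linear_combination -this
    · simp [hu k hki hkl, hw k hki hkl]
  have := (LinearIndependent.pair_iff.1 hind _ _ hrel).2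
  exact coord_ne_zero_of_mem_Hlat hu hu0 (by exact_mod_cast neg_eq_zero.1 this)

end Hlat

lemma one_le_abs_mul_add_abs_mul {a c a' c' : ℤ} (h : a * c' - a' * c ≠ 0) (x : ℝ) :
    1 ≤ |(a : ℝ)| * |a' * x + c'| + |(a' : ℝ)| * |a * x + c| := by
  calc (1 : ℝ) ≤ |((a * c' - a' * c : ℤ) : ℝ)| := by exact_mod_cast Int.one_le_abs h
    _ = |a * (a' * x + c') - a' * (a * x + c)| := by push_cast; ring_nf
    _ ≤ |a * (a' * x + c')| + |a' * (a * x + c)| := abs_sub _ _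
    _ = |(a : ℝ)| * |a' * x + c'| + |(a' : ℝ)| * |a * x + c| := by rw [abs_mul, abs_mul]

lemma _root_.LinearIndependent.pair_of_triple {R M : Type*} [Ring R] [AddCommGroup M]
    [Module R M] {x y z : M} (h : LinearIndependent R ![x, y, z]) : LinearIndependent R ![x, z] := by
  convert h.comp ![0, 2] (by decide) using 1
  ext k
  fin_cases k <;> rfl

lemma IsBestApproxSeq.one_le_two_mul_norm_hat_mul_linForm {n : ℕ} {ξ : Fin n → ℝ}
    {Q : ℕ → Fin (n + 1) → ℤ} (hQ : IsBestApproxSeq ξ Q) {i : Fin n} {j : ℕ}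
    (hj : Q j ∈ Hlat n i.castSucc) (hj2 : Q (j + 2) ∈ Hlat n i.castSucc)
    (hind : LinearIndependent ℝ ![realVec (Q j), realVec (Q (j + 2))]) :
    1 ≤ 2 * ‖hat (Q (j + 2))‖ * linForm ξ (Q j) := by
  have hX : ‖hat (Q j)‖ ≤ ‖hat (Q (j + 2))‖ := hQ.norm_hat_strictMono.monotone (by omega)
  have hL : linForm ξ (Q (j + 2)) ≤ linForm ξ (Q j) := hQ.linForm_strictAnti.antitone (by omega)
  have hdet := one_le_abs_mul_add_abs_mul
    (minor_ne_zero_of_mem_Hlat hj hj2 (hQ.1 j).1 hind) (ξ i)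
  rw [← norm_hat_of_mem_Hlat hj, ← norm_hat_of_mem_Hlat hj2, ← linForm_of_mem_Hlat ξ hj,
    ← linForm_of_mem_Hlat ξ hj2] at hdet
  calc 1 ≤ _ := hdet
    _ ≤ ‖hat (Q (j + 2))‖ * linForm ξ (Q j) + ‖hat (Q (j + 2))‖ * linForm ξ (Q j) := by
      gcongr
      exact linForm_nonneg ξ _
    _ = 2 * ‖hat (Q (j + 2))‖ * linForm ξ (Q j) := by ring

lemma pow_four_mul_le_sixteen {X Y L L' : ℝ} (hX : 5 ≤ X) (hL0 : 0 ≤ L)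
    (hL : L ≤ ((X - 1) ^ 2)⁻¹) (hYL : 1 ≤ 2 * Y * L) (hL' : L' ≤ ((Y - 1) ^ 2)⁻¹) :
    X ^ 4 * L' ≤ 16 := by
  have hX1 : 0 < (X - 1) ^ 2 := pow_pos (by linarith) 2
  have hLX : L * (X - 1) ^ 2 ≤ 1 := by
    calc L * (X - 1) ^ 2 ≤ ((X - 1) ^ 2)⁻¹ * (X - 1) ^ 2 := by gcongr
      _ = 1 := inv_mul_cancel₀ hX1.ne'
  have hY0 : 0 ≤ Y := by nlinarith
  have hXY : (X - 1) ^ 2 ≤ 2 * Y :=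
    calc (X - 1) ^ 2 ≤ 2 * Y * L * (X - 1) ^ 2 := le_mul_of_one_le_left hX1.le hYL
      _ = 2 * Y * (L * (X - 1) ^ 2) := by ring
      _ ≤ 2 * Y := mul_le_of_le_one_right (by positivity) hLX
  have hY : X ^ 2 / 4 ≤ Y - 1 := by nlinarith
  have hY' : X ^ 4 / 16 ≤ (Y - 1) ^ 2 := by nlinarith
  calc X ^ 4 * L' ≤ X ^ 4 * ((Y - 1) ^ 2)⁻¹ := by gcongr
    _ ≤ 16 := by
      rw [mul_inv_le_iff₀ (by nlinarith)]
      linarith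

def AlternatesFrom (Q : ℕ → Fin 3 → ℤ) (j₀ : ℕ) : Prop :=
  (∀ j ≥ j₀, Q j ∈ Hlat 2 0 ∪ Hlat 2 1) ∧
    (∀ j ≥ j₀, ¬(Q j ∈ Hlat 2 0 ∧ Q (j + 1) ∈ Hlat 2 0) ∧
      ¬(Q j ∈ Hlat 2 1 ∧ Q (j + 1) ∈ Hlat 2 1))

namespace AlternatesFrom

variable {Q : ℕ → Fin 3 → ℤ} {j₀ : ℕ}

lemma mem_succ_of_not_mem (hA : AlternatesFrom Q j₀) {j : ℕ} (hj : j₀ ≤ j) (i : Fin 2)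
    (hi : Q j ∉ Hlat 2 i.castSucc) :
    Q (j + 1) ∈ Hlat 2 i.castSucc := by
  have h := hA.1 j hj
  have h1 := hA.1 (j + 1) (by omega)
  have h2 := hA.2 j hj
  fin_cases i <;> simp_all

lemma exists_mem_and_mem_add_two (hA : AlternatesFrom Q j₀) {j : ℕ} (hj : j₀ ≤ j) :
    ∃ i : Fin 2, Q j ∈ Hlat 2 i.castSucc ∧ Q (j + 2) ∈ Hlat 2 i.castSucc := by
  obtain ⟨i, hi⟩ : ∃ i : Fin 2, Q j ∈ Hlat 2 i.castSucc := by
    rcases hA.1 j hj with h | h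
    exacts [⟨0, h⟩, ⟨1, h⟩]
  refine ⟨i, hi, hA.mem_succ_of_not_mem (by omega) i fun hi1 => ?_⟩
  have h2 := hA.2 j hj
  fin_cases i <;> simp_all

lemma frequently_mem (hA : AlternatesFrom Q j₀) (i : Fin 2) :
    ∃ᶠ j in atTop, Q (j + 1) ∈ Hlat 2 i.castSucc := by
  refine frequently_atTop.2 fun a => ?_
  by_cases h : Q (max a j₀ + 1) ∈ Hlat 2 i.castSucc
  · exact ⟨max a j₀, le_max_left _ _, h⟩
  · exact ⟨max a j₀ + 1, by omega, hA.mem_succ_of_not_mem (by omega) i h⟩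

end AlternatesFrom

lemma pow_four_mul_linForm_le_sixteen {ξ : Fin 2 → ℝ} {Q : ℕ → Fin 3 → ℤ}
    (hQ : IsBestApproxSeq ξ Q) {j₀ : ℕ} (hA : AlternatesFrom Q j₀)
    (hind : ∀ j ≥ j₀, LinearIndependent ℝ
      ![realVec (Q j), realVec (Q (j + 1)), realVec (Q (j + 2))])
    {j : ℕ} (hj : j₀ ≤ j) (hX : 5 ≤ ‖hat (Q (j + 1))‖) :
    ‖hat (Q (j + 1))‖ ^ 4 * linForm ξ (Q (j + 1)) ≤ 16 := by
  obtain ⟨i, hi, hi2⟩ := hA.exists_mem_and_mem_add_two hj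
  have hXY : ‖hat (Q (j + 1))‖ < ‖hat (Q (j + 2))‖ := hQ.norm_hat_strictMono (by omega)
  exact pow_four_mul_le_sixteen hX (linForm_nonneg ξ _)
    (hQ.linForm_le_inv_pow two_pos j (by linarith))
    (hQ.one_le_two_mul_norm_hat_mul_linForm hi hi2 (hind j hj).pair_of_triple)
    (hQ.linForm_le_inv_pow two_pos (j + 1) (by linarith))

lemma four_le_oexp_of_mem_Theta {ξ : Fin 2 → ℝ} (hξ : ξ ∈ Theta 2) (i : Fin 2) :
    ((4 : ℝ) : EReal) ≤ oexp ![ξ i] := by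
  obtain ⟨-, Q, hQ, j₀, hmem, halt, hind⟩ := hξ
  have hA : AlternatesFrom Q j₀ := ⟨hmem, halt⟩
  have hX := hQ.tendsto_norm_hat.comp (tendsto_add_atTop_nat 1)
  have hfreq : ∃ᶠ j in atTop, Q (j + 1) ∈ Hlat 2 i.castSucc ∧
      (j₀ ≤ j ∧ 5 ≤ ‖hat (Q (j + 1))‖) :=
    (hA.frequently_mem i).and_eventually
      ((eventually_ge_atTop j₀).and (hX.eventually_ge_atTop 5))
  refine le_oexp_of_frequently (C := 16) four_pos (hX.frequently_map _ ?_ hfreq)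
  rintro j ⟨hi, hj, h5⟩
  calc ‖hat (Q (j + 1))‖ ^ (4 : ℝ) * minForm ![ξ i] ‖hat (Q (j + 1))‖
      ≤ ‖hat (Q (j + 1))‖ ^ 4 * linForm ξ (Q (j + 1)) := by
        rw [Real.rpow_ofNat]
        gcongr
        exact minForm_coord_le_linForm ξ hi (hQ.1 _).1
    _ ≤ 16 := pow_four_mul_linForm_le_sixteen hQ hA hind hj h5

/-- every `ξ = (ξ₁,ξ₂) ∈ Θ²` satisfies `min{ω(ξ₁), ω(ξ₂)} ≥ 4`. -/
theorem Theta_two_oexp (ξ : Fin 2 → ℝ) (hξ : ξ ∈ Theta 2) :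
    ((4 : ℝ) : EReal) ≤ min (oexp ![ξ 0]) (oexp ![ξ 1]) :=
  le_min (four_le_oexp_of_mem_Theta hξ 0) (four_le_oexp_of_mem_Theta hξ 1)

end BestApprox
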